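/- Let R be a commutative ring, A a finite free R-module of rank r, and 0 < s < r integers. Let B ⊆ A and C ⊆ A be R-submodules such that B is finite free of rank s, C is finite free of rank r−s, and the quotient modules A/B and A/C are finite free (necessarily of ranks r−s and s respectively). Let f : C → A/B and g : B → A/C be the natural maps (inclusion followed by the quotient projection), and let σ : A/B → A and τ : A/C → A be arbitrary R-linear sections of the quotient projections. Then for every β ∈ ⋀^s B and every γ ∈ ⋀^{r−s} C one has the identity in ⋀^r A: ι_B(β) ∧ (⋀^{r−s} σ)((⋀^{r−s} f)(γ)) = (−1)^{s(r−s)} · ι_C(γ) ∧ (⋀^s τ)((⋀^s g)(β)), where ι_B : ⋀^s B → ⋀^s A and ι_C : ⋀^{r−s} C → ⋀^{r−s} A are the maps induced by the inclusions, and ∧ denotes the wedge product ⋀^s A × ⋀^{r−s} A → ⋀^r A. In particular the identity is independent of the choice of sections σ and τ. (This is the module-theoretic form of the paper's key Proposition: the determinant section x of the natural map C → A/B and the determinant section y of the natural map B → A/C coincide under the canonical isomorphism det(A/B) ⊗ det(C)^{-1} ≅ det(A/C) ⊗ det(B)^{-1}, both being induced by the determinant of the map B ⊕ C → A.) -/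

import Mathlib

/-!
Write `x = ι_B(β) ∈ ⋀^s A` and `y = ι_C(γ) ∈ ⋀^{r-s} A`. Since `⋀^{s+1} B = 0`, wedging `x` with
any vector of `B` gives zero, so `x ∧ -` only sees vectors of `A` modulo `B`. The section
`σ ∘ f : C → A` agrees with the inclusion of `C` modulo `B`, hence `x ∧ ⋀(σ ∘ f)(γ) = x ∧ y`.
Symmetrically `y ∧ ⋀(τ ∘ g)(β) = y ∧ x`, and graded commutativity gives
`x ∧ y = (-1)^{s(r-s)} y ∧ x`.
-/

namespace ExteriorAlgebra

variable {R M N : Type*} [CommRing R] [AddCommGroup M] [Module R M] [AddCommGroup N] [Module R N]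

theorem ι_mem_exteriorPower_one (m : M) : ι R m ∈ ⋀[R]^1 M := by
  simp

theorem map_mem_exteriorPower (f : M →ₗ[R] N) {n : ℕ} {x : ExteriorAlgebra R M}
    (hx : x ∈ ⋀[R]^n M) : map f x ∈ ⋀[R]^n N := by
  induction hx using Submodule.pow_induction_on_left' with
  | algebraMap r => simp
  | add x y i _ _ hx hy => simpa using add_mem hx hy
  | mem_mul m hm i x _ hx =>
    obtain ⟨m, rfl⟩ := hm
    rw [map_mul, map_apply_ι, exteriorPower, pow_succ']
    exact Submodule.mul_mem_mul (LinearMap.mem_range_self _ _) hx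

theorem ι_mul_comm_of_mem_exteriorPower {n : ℕ} {x : ExteriorAlgebra R M}
    (hx : x ∈ ⋀[R]^n M) (m : M) : ι R m * x = (-1 : R) ^ n • (x * ι R m) := by
  induction hx using Submodule.pow_induction_on_left' with
  | algebraMap r => simp [Algebra.commutes]
  | add x y i _ _ hx hy => rw [mul_add, hx, hy, add_mul, smul_add]
  | mem_mul m' hm i x _ hx =>
    obtain ⟨m', rfl⟩ := hm
    rw [← mul_assoc, eq_neg_of_add_eq_zero_left (ι_add_mul_swap m m'), neg_mul, mul_assoc, hx,
      mul_smul_comm, ← mul_assoc, pow_succ, mul_comm, mul_smul, neg_one_smul]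

theorem mul_comm_of_mem_exteriorPower {p q : ℕ} {x y : ExteriorAlgebra R M}
    (hx : x ∈ ⋀[R]^p M) (hy : y ∈ ⋀[R]^q M) : x * y = (-1 : R) ^ (p * q) • (y * x) := by
  induction hx using Submodule.pow_induction_on_left' with
  | algebraMap r => simp [Algebra.commutes]
  | add x x' i _ _ hx hx' => rw [add_mul, hx, hx', mul_add, smul_add]
  | mem_mul m hm i x _ hx =>
    obtain ⟨m, rfl⟩ := hm
    rw [mul_assoc, hx, mul_smul_comm, ← mul_assoc, ι_mul_comm_of_mem_exteriorPower hy,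
      smul_mul_assoc, smul_smul, mul_assoc, ← pow_add, Nat.succ_mul, add_comm]

theorem eq_zero_of_mem_exteriorPower_of_finrank_lt [Module.Free R M] [Module.Finite R M]
    {n : ℕ} (h : Module.finrank R M < n) {x : ExteriorAlgebra R M} (hx : x ∈ ⋀[R]^n M) :
    x = 0 := by
  have : Subsingleton (⋀[R]^n M) := by
    rcases subsingleton_or_nontrivial R with hR | hR
    · exact Module.subsingleton R _
    · rw [← Module.finrank_eq_zero_iff_of_free (R := R), exteriorPower.finrank_eq R n,
        Nat.choose_eq_zero_of_lt h]
  exact congrArg Subtype.val (Subsingleton.elim (⟨x, hx⟩ : ⋀[R]^n M) 0)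

theorem map_subtype_mul_ι_eq_zero {P : Submodule R M} [Module.Free R P] [Module.Finite R P]
    {n : ℕ} (hn : Module.finrank R P ≤ n) {β : ExteriorAlgebra R P} (hβ : β ∈ ⋀[R]^n P)
    {m : M} (hm : m ∈ P) : map P.subtype β * ι R m = 0 := by
  have hβm : β * ι R ⟨m, hm⟩ ∈ ⋀[R]^(n + 1) P := by
    rw [exteriorPower, pow_succ]
    exact Submodule.mul_mem_mul hβ (LinearMap.mem_range_self _ _)
  change map P.subtype β * ι R (P.subtype ⟨m, hm⟩) = 0
  rw [← map_apply_ι, ← map_mul,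
    eq_zero_of_mem_exteriorPower_of_finrank_lt (Nat.lt_succ_of_le hn) hβm, map_zero]

theorem mul_map_eq_mul_map {p q : ℕ} {x : ExteriorAlgebra R N} (hx : x ∈ ⋀[R]^p N)
    (h k : M →ₗ[R] N) (hhk : ∀ m, x * ι R (h m - k m) = 0) {γ : ExteriorAlgebra R M}
    (hγ : γ ∈ ⋀[R]^q M) : x * map h γ = x * map k γ := by
  have hι : ∀ m, x * ι R (h m) = x * ι R (k m) := fun m => by
    rw [← sub_eq_zero, ← mul_sub, ← map_sub]
    exact hhk m
  induction hγ using Submodule.pow_induction_on_left' with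
  | algebraMap r => simp only [AlgHom.commutes]
  | add y y' i _ _ hy hy' => rw [map_add, map_add, mul_add, mul_add, hy, hy']
  | mem_mul m hm i y _ hy =>
    obtain ⟨m, rfl⟩ := hm
    simp only [map_mul, map_apply_ι, ← mul_assoc]
    rw [hι, mul_comm_of_mem_exteriorPower hx (ι_mem_exteriorPower_one _), smul_mul_assoc,
      smul_mul_assoc, mul_assoc, mul_assoc, hy]

theorem mul_map_section_comp_mkQ {p q : ℕ} {P Q : Submodule R M} {σ : M ⧸ P →ₗ[R] M}
    (hσ : P.mkQ ∘ₗ σ = LinearMap.id) {x : ExteriorAlgebra R M} (hx : x ∈ ⋀[R]^p M)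
    (hxP : ∀ m ∈ P, x * ι R m = 0) {γ : ExteriorAlgebra R Q} (hγ : γ ∈ ⋀[R]^q Q) :
    x * map σ (map (P.mkQ ∘ₗ Q.subtype) γ) = x * map Q.subtype γ := by
  have hσP : ∀ m, σ (P.mkQ m) - m ∈ P := fun m =>
    (Submodule.Quotient.eq P).mp (LinearMap.congr_fun hσ (P.mkQ m))
  rw [← AlgHom.comp_apply, map_comp_map]
  exact mul_map_eq_mul_map hx (σ ∘ₗ P.mkQ ∘ₗ Q.subtype) Q.subtype (fun c => hxP _ (hσP c)) hγ

end ExteriorAlgebra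

open ExteriorAlgebra

theorem determinant_sections_agree
    (R : Type*) [CommRing R] (A : Type*) [AddCommGroup A] [Module R A]
    (r s : ℕ)
    (B C : Submodule R A)
    [Module.Finite R B] [Module.Free R B] (hrB : Module.finrank R B = s)
    [Module.Finite R C] [Module.Free R C] (hrC : Module.finrank R C = r - s)
    (f : C →ₗ[R] A ⧸ B) (hf : f = B.mkQ.comp C.subtype)
    (g : B →ₗ[R] A ⧸ C) (hg : g = C.mkQ.comp B.subtype)
    (σ : (A ⧸ B) →ₗ[R] A) (hσ : B.mkQ.comp σ = LinearMap.id)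
    (τ : (A ⧸ C) →ₗ[R] A) (hτ : C.mkQ.comp τ = LinearMap.id)
    (β : ⋀[R]^s (B : Type _)) (γ : ⋀[R]^(r - s) (C : Type _)) :
    ExteriorAlgebra.map B.subtype (β : ExteriorAlgebra R B) *
        ExteriorAlgebra.map σ (ExteriorAlgebra.map f (γ : ExteriorAlgebra R C)) =
      ((-1 : R) ^ (s * (r - s))) •
        (ExteriorAlgebra.map C.subtype (γ : ExteriorAlgebra R C) *
          ExteriorAlgebra.map τ (ExteriorAlgebra.map g (β : ExteriorAlgebra R B))) := by
  subst hf hg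
  have hx := map_mem_exteriorPower B.subtype β.2
  have hy := map_mem_exteriorPower C.subtype γ.2
  rw [mul_map_section_comp_mkQ hσ hx (fun _ => map_subtype_mul_ι_eq_zero hrB.le β.2) γ.2,
    mul_map_section_comp_mkQ hτ hy (fun _ => map_subtype_mul_ι_eq_zero hrC.le γ.2) β.2]
  exact mul_comm_of_mem_exteriorPower hx hy
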